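/- Suppose ‖A - A'‖₁ ≤ 4δ with A column stochastic (so ‖A‖₁ = 1), m ∈ (0,1), and δ ≤ mε/(4(1-m)(1+ε)) for some ε ∈ (0,1). Then (1-m)‖A'‖₁ < 1, and the fixed points x* = (1-m)Ax* + (m/n)1_n and x' = (1-m)A'x' + (m/n)1_n (with x* a probability vector) satisfy ‖x* - x'‖₁ ≤ 4δ(1-m)/(1-(1-m)(1+4δ)) ≤ ε. -/
import Mathlib


/-- Column stochastic: nonnegative entries, each column sums to 1. -/
def ColStoch {n : ℕ} (A : Matrix (Fin n) (Fin n) ℝ) : Prop :=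
  (∀ i j, 0 ≤ A i j) ∧ ∀ j, ∑ i, A i j = 1

/-- A probability vector. -/
def ProbVec {n : ℕ} (x : Fin n → ℝ) : Prop :=
  (∀ i, 0 ≤ x i) ∧ ∑ i, x i = 1

/-- Induced matrix 1-norm: maximum absolute column sum. -/
noncomputable def mnorm1 {n : ℕ} (M : Matrix (Fin n) (Fin n) ℝ) : ℝ :=
  ⨆ j, ∑ i, |M i j|

/-- Vector 1-norm. -/
def vnorm1 {n : ℕ} (x : Fin n → ℝ) : ℝ := ∑ i, |x i|

lemma col_le_mnorm1 {n : ℕ} (M : Matrix (Fin n) (Fin n) ℝ) (j : Fin n) :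
    ∑ i, |M i j| ≤ mnorm1 M :=
  le_ciSup (f := fun j => ∑ i, |M i j|) (Set.Finite.bddAbove (Set.finite_range _)) j

lemma mnorm1_le {n : ℕ} [Nonempty (Fin n)] (M : Matrix (Fin n) (Fin n) ℝ) (c : ℝ)
    (h : ∀ j, ∑ i, |M i j| ≤ c) : mnorm1 M ≤ c :=
  ciSup_le h

lemma vnorm1_mulVec_le {n : ℕ} (M : Matrix (Fin n) (Fin n) ℝ) (x : Fin n → ℝ) :
    vnorm1 (M.mulVec x) ≤ mnorm1 M * vnorm1 x := by
  unfold vnorm1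
  calc ∑ i, |M.mulVec x i| ≤ ∑ i, ∑ j, |M i j| * |x j| := by
        apply Finset.sum_le_sum; intro i _
        have := Finset.abs_sum_le_sum_abs (fun j => M i j * x j) Finset.univ
        simpa [Matrix.mulVec, dotProduct, abs_mul] using this
    _ = ∑ j, (∑ i, |M i j|) * |x j| := by
        rw [Finset.sum_comm]
        simp [Finset.sum_mul]
    _ ≤ ∑ j, mnorm1 M * |x j| := by
        apply Finset.sum_le_sum; intro j _
        exact mul_le_mul_of_nonneg_right (col_le_mnorm1 M j) (abs_nonneg _)
    _ = mnorm1 M * ∑ j, |x j| := by rw [Finset.mul_sum]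

/-- If `‖A - A'‖₁ ≤ 4δ` with `A` column stochastic and
`δ ≤ mε/(4(1-m)(1+ε))`, then `(1-m)‖A'‖₁ < 1` and the fixed points `x*`, `x'`
satisfy `‖x* - x'‖₁ ≤ 4δ(1-m)/(1-(1-m)(1+4δ)) ≤ ε`. -/
theorem stmt11 {n : ℕ} (hn : 0 < n) (A A' : Matrix (Fin n) (Fin n) ℝ)
    (hA : ColStoch A)
    (m : ℝ) (hm0 : 0 < m) (hm1 : m < 1)
    (ε : ℝ) (hε0 : 0 < ε) (hε1 : ε < 1)
    (δ : ℝ) (hδ0 : 0 < δ) (hδ : δ ≤ m * ε / (4 * (1 - m) * (1 + ε)))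
    (hAA' : mnorm1 (A - A') ≤ 4 * δ)
    (xstar x' : Fin n → ℝ) (hxp : ProbVec xstar)
    (hxstar : xstar = (1 - m) • A.mulVec xstar + (m / n) • (fun _ => (1 : ℝ)))
    (hx' : x' = (1 - m) • A'.mulVec x' + (m / n) • (fun _ => (1 : ℝ))) :
    (1 - m) * mnorm1 A' < 1 ∧
    vnorm1 (xstar - x') ≤ 4 * δ * (1 - m) / (1 - (1 - m) * (1 + 4 * δ)) ∧
    4 * δ * (1 - m) / (1 - (1 - m) * (1 + 4 * δ)) ≤ ε := by
  haveI : Nonempty (Fin n) := Fin.pos_iff_nonempty.mp hn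
  have hm1' : 0 < 1 - m := by linarith
  -- key numeric bound: 4δ(1-m)(1+ε) ≤ mε
  have hkey : 4 * δ * (1 - m) * (1 + ε) ≤ m * ε := by
    have h4 : 0 < 4 * (1 - m) * (1 + ε) := by positivity
    rw [div_eq_mul_inv] at hδ
    nlinarith [mul_le_mul_of_nonneg_right hδ h4.le, mul_inv_cancel₀ h4.ne']
  have hden : 0 < 1 - (1 - m) * (1 + 4 * δ) := by nlinarith
  -- mnorm1 A = 1
  have hAn : mnorm1 A = 1 := by
    have : ∀ j, ∑ i, |A i j| = 1 := by
      intro j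
      rw [← hA.2 j]
      exact Finset.sum_congr rfl fun i _ => abs_of_nonneg (hA.1 i j)
    unfold mnorm1
    simp [this]
  -- mnorm1 A' ≤ 1 + 4δ
  have hA' : mnorm1 A' ≤ 1 + 4 * δ := by
    apply mnorm1_le
    intro j
    calc ∑ i, |A' i j| ≤ ∑ i, (|A i j| + |(A - A') i j|) := by
          apply Finset.sum_le_sum; intro i _
          have : A' i j = A i j - (A - A') i j := by simp [Matrix.sub_apply]
          rw [this]
          exact (abs_sub _ _).trans le_rfl
      _ = (∑ i, |A i j|) + ∑ i, |(A - A') i j| := Finset.sum_add_distrib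
      _ ≤ mnorm1 A + mnorm1 (A - A') := add_le_add (col_le_mnorm1 A j) (col_le_mnorm1 (A - A') j)
      _ ≤ 1 + 4 * δ := by rw [hAn]; linarith
  have part1 : (1 - m) * mnorm1 A' < 1 := by nlinarith
  -- vnorm1 xstar = 1
  have hxn : vnorm1 xstar = 1 := by
    unfold vnorm1
    rw [← hxp.2]
    exact Finset.sum_congr rfl fun i _ => abs_of_nonneg (hxp.1 i)
  -- difference equation
  have hdiff : xstar - x' = (1 - m) • ((A - A').mulVec xstar + A'.mulVec (xstar - x')) := by
    nth_rewrite 1 [hxstar, hx']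
    funext i
    simp [Matrix.sub_mulVec, Matrix.mulVec_sub, Matrix.mulVec, dotProduct,
      Finset.sum_sub_distrib, Finset.mul_sum, mul_sub, sub_mul]
  set t := vnorm1 (xstar - x') with ht
  have ht0 : 0 ≤ t := Finset.sum_nonneg fun i _ => abs_nonneg _
  have htri : ∀ u v : Fin n → ℝ, vnorm1 (u + v) ≤ vnorm1 u + vnorm1 v := by
    intro u v
    unfold vnorm1
    rw [← Finset.sum_add_distrib]
    exact Finset.sum_le_sum fun i _ => abs_add_le _ _
  have hsmul : ∀ (c : ℝ) (v : Fin n → ℝ), vnorm1 (c • v) = |c| * vnorm1 v := by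
    intro c v
    unfold vnorm1
    rw [Finset.mul_sum]
    exact Finset.sum_congr rfl fun i _ => by simp [abs_mul]
  have heq : vnorm1 (xstar - x') =
      (1 - m) * vnorm1 ((A - A').mulVec xstar + A'.mulVec (xstar - x')) := by
    conv_lhs => rw [hdiff]
    rw [hsmul, abs_of_nonneg hm1'.le]
  have hbound : t ≤ (1 - m) * (4 * δ + mnorm1 A' * t) := by
    calc t = (1 - m) * vnorm1 ((A - A').mulVec xstar + A'.mulVec (xstar - x')) := by
            rw [ht]; exact heq
      _ ≤ (1 - m) * (4 * δ + mnorm1 A' * t) := by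
          apply mul_le_mul_of_nonneg_left _ hm1'.le
          calc vnorm1 ((A - A').mulVec xstar + A'.mulVec (xstar - x'))
              ≤ vnorm1 ((A - A').mulVec xstar) + vnorm1 (A'.mulVec (xstar - x')) := htri _ _
            _ ≤ mnorm1 (A - A') * vnorm1 xstar + mnorm1 A' * vnorm1 (xstar - x') :=
                add_le_add (vnorm1_mulVec_le _ _) (vnorm1_mulVec_le _ _)
            _ ≤ 4 * δ + mnorm1 A' * t := by rw [hxn, mul_one, ← ht]; linarith
  refine ⟨part1, ?_, ?_⟩
  · rw [ht, le_div_iff₀ hden]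
    nlinarith [mul_le_mul_of_nonneg_right hA' ht0]
  · rw [div_le_iff₀ hden]
    nlinarith
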